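/- Let m ≥ 2 and let Ā₀ be the m×m real matrix with Ā₀_{i,i+1} = Ā₀_{i+1,i} = 1 for 1 ≤ i ≤ m−1, Ā₀_{mm} = 1, and all other entries zero. Then the m×m matrix whose columns are e₁, Ā₀² e₁, Ā₀⁴ e₁, …, Ā₀^{2(m−1)} e₁ is invertible. -/

import Mathlib

open Matrix

/-- The `m×m` matrix `Ā₀` with `Ā₀_{i,i+1} = Ā₀_{i+1,i} = 1`, `Ā₀_{mm} = 1`, and all
other entries zero. -/
def Abar0 (m : ℕ) : Matrix (Fin m) (Fin m) ℝ :=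
  Matrix.of fun i j =>
    if (i : ℕ) + 1 = (j : ℕ) ∨ (j : ℕ) + 1 = (i : ℕ) then 1
    else if i = j ∧ (i : ℕ) + 1 = m then 1
    else 0

lemma Abar0_mulVec (m : ℕ) (x : Fin m → ℝ) (i : Fin m) :
    (Abar0 m).mulVec x i =
      (if h : 1 ≤ (i : ℕ) then x ⟨(i : ℕ) - 1, by omega⟩ else 0) +
      (if h : (i : ℕ) + 1 < m then x ⟨(i : ℕ) + 1, h⟩ else x i) := by
  classical
  have hsum : (Abar0 m).mulVec x i =
      ∑ j : Fin m, ((if (j : ℕ) + 1 = (i : ℕ) then x j else 0) +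
        (if (i : ℕ) + 1 = (j : ℕ) ∨ (i = j ∧ (i : ℕ) + 1 = m) then x j else 0)) := by
    unfold Matrix.mulVec dotProduct Abar0
    refine Finset.sum_congr rfl fun j _ => ?_
    simp only [Matrix.of_apply]
    by_cases h1 : (j : ℕ) + 1 = (i : ℕ) <;>
    by_cases h2 : (i : ℕ) + 1 = (j : ℕ) <;>
    by_cases h3 : i = j ∧ (i : ℕ) + 1 = m <;>
      simp_all [Fin.ext_iff] <;> omega
  rw [hsum, Finset.sum_add_distrib]
  congr 1
  · by_cases h : 1 ≤ (i : ℕ)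
    · have : ∀ j : Fin m, ((j : ℕ) + 1 = (i : ℕ)) ↔ j = ⟨(i : ℕ) - 1, by omega⟩ := by
        intro j; rw [Fin.ext_iff]; simp; omega
      simp only [this]
      rw [Finset.sum_ite_eq']
      simp [h]
    · have : ∀ j : Fin m, ¬ ((j : ℕ) + 1 = (i : ℕ)) := by intro j; omega
      simp [this, h]
  · by_cases h : (i : ℕ) + 1 < m
    · have : ∀ j : Fin m, ((i : ℕ) + 1 = (j : ℕ) ∨ (i = j ∧ (i : ℕ) + 1 = m)) ↔ j = ⟨(i : ℕ) + 1, h⟩ := by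
        intro j; rw [Fin.ext_iff]; simp [Fin.ext_iff]; omega
      simp only [this]
      rw [Finset.sum_ite_eq']
      simp [h]
    · have him : (i : ℕ) + 1 = m := by have := i.isLt; omega
      have : ∀ j : Fin m, ((i : ℕ) + 1 = (j : ℕ) ∨ (i = j ∧ (i : ℕ) + 1 = m)) ↔ j = i := by
        intro j; have := j.isLt; constructor
        · rintro (h1 | ⟨h1, _⟩); · omega
          · exact h1.symm
        · rintro rfl; exact Or.inr ⟨rfl, him⟩
      simp only [this]
      rw [Finset.sum_ite_eq']
      simp [h]

noncomputable def wvec (m : ℕ) (hm : 2 ≤ m) (k : ℕ) : Fin m → ℝ :=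
  (Abar0 m ^ k).mulVec (Pi.single (⟨0, Nat.lt_of_lt_of_le Nat.two_pos hm⟩ : Fin m) 1)

lemma wvec_succ (m : ℕ) (hm : 2 ≤ m) (k : ℕ) (i : Fin m) :
    wvec m hm (k + 1) i =
      (if h : 1 ≤ (i : ℕ) then wvec m hm k ⟨(i : ℕ) - 1, by omega⟩ else 0) +
      (if h : (i : ℕ) + 1 < m then wvec m hm k ⟨(i : ℕ) + 1, h⟩ else wvec m hm k i) := by
  have : wvec m hm (k + 1) = (Abar0 m).mulVec (wvec m hm k) := by
    unfold wvec
    rw [Matrix.mulVec_mulVec, ← pow_succ']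
  rw [this, Abar0_mulVec]

lemma wvec_key (m : ℕ) (hm : 2 ≤ m) (k : ℕ) :
    (∀ i, 0 ≤ wvec m hm k i) ∧
    (∀ i : Fin m, wvec m hm k i ≠ 0 →
      ((i : ℕ) ≤ k ∧ (i : ℕ) % 2 = k % 2) ∨
      (2 * m ≤ (i : ℕ) + k + 1 ∧ ((i : ℕ) + k) % 2 = 1)) ∧
    (∀ h : k < m, wvec m hm k ⟨k, h⟩ = 1) ∧
    (∀ _ : m ≤ k, ∀ _ : k ≤ 2 * m - 2, wvec m hm k ⟨2 * m - 1 - k, by omega⟩ = 1) := by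
  induction k with
  | zero =>
    have h0 : wvec m hm 0 = Pi.single (⟨0, by omega⟩ : Fin m) 1 := by
      unfold wvec; rw [pow_zero, Matrix.one_mulVec]
    refine ⟨?_, ?_, ?_, ?_⟩
    · intro i; rw [h0]
      rcases eq_or_ne i ⟨0, by omega⟩ with rfl | h
      · simp
      · rw [Pi.single_eq_of_ne h]
    · intro i hi
      rw [h0] at hi
      rcases eq_or_ne i ⟨0, by omega⟩ with rfl | h
      · left; simp
      · rw [Pi.single_eq_of_ne h] at hi; exact absurd rfl hi
    · intro h; rw [h0]; simp
    · intro h; omega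
  | succ k ih =>
    obtain ⟨ihpos, ihsupp, ihdiag, ihrefl⟩ := ih
    have hzero : ∀ i : Fin m, ¬ (((i : ℕ) ≤ k ∧ (i : ℕ) % 2 = k % 2) ∨
        (2 * m ≤ (i : ℕ) + k + 1 ∧ ((i : ℕ) + k) % 2 = 1)) → wvec m hm k i = 0 := by
      intro i h
      by_contra hc
      exact h (ihsupp i hc)
    have hpos : ∀ i, 0 ≤ wvec m hm (k+1) i := by
      intro i
      rw [wvec_succ]
      apply add_nonneg <;> (split_ifs <;> first | exact ihpos _ | exact le_refl 0)
    refine ⟨hpos, ?_, ?_, ?_⟩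
    · -- support
      intro i hi
      rw [wvec_succ] at hi
      have hi' : (if h : 1 ≤ (i : ℕ) then wvec m hm k ⟨(i : ℕ) - 1, by omega⟩ else 0) ≠ 0 ∨
          (if h : (i : ℕ) + 1 < m then wvec m hm k ⟨(i : ℕ) + 1, h⟩ else wvec m hm k i) ≠ 0 := by
        by_contra hc
        push_neg at hc
        rw [hc.1, hc.2] at hi
        simp at hi
      have him := i.isLt
      rcases hi' with h1 | h2
      · by_cases hge : 1 ≤ (i : ℕ)
        · rw [dif_pos hge] at h1
          have := ihsupp _ h1
          simp only [Fin.val_mk] at this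
          omega
        · rw [dif_neg hge] at h1
          exact absurd rfl h1
      · by_cases h : (i : ℕ) + 1 < m
        · rw [dif_pos h] at h2
          have := ihsupp _ h2
          simp only [Fin.val_mk] at this
          omega
        · rw [dif_neg h] at h2
          have := ihsupp _ h2
          omega
    · -- diagonal
      intro h
      rw [wvec_succ]
      simp only [Fin.val_mk]
      rw [dif_pos (by omega)]
      have hd : wvec m hm k ⟨k + 1 - 1, by omega⟩ = 1 := by
        have := ihdiag (by omega)
        convert this using 2
        exact Fin.ext (by simp only [Fin.val_mk]; omega)
      rw [hd]
      by_cases h2 : k + 1 + 1 < m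
      · rw [dif_pos h2]
        rw [hzero ⟨k + 2, by omega⟩ (by simp only [Fin.val_mk]; omega)]
        ring
      · rw [dif_neg h2]
        rw [hzero ⟨k + 1, h⟩ (by simp only [Fin.val_mk]; omega)]
        ring
    · -- reflection
      intro hk1 hk2
      rw [wvec_succ]
      simp only [Fin.val_mk]
      rw [dif_pos (by omega)]
      by_cases hc : k + 1 = m
      · -- j = m - 1 case
        have hj : 2 * m - 1 - (k + 1) = m - 1 := by omega
        rw [dif_neg (by omega)]
        have e1 : wvec m hm k ⟨2 * m - 1 - (k + 1) - 1, by omega⟩ = 0 := by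
          apply hzero; simp only [Fin.val_mk]; omega
        have e2 : wvec m hm k ⟨2 * m - 1 - (k + 1), by omega⟩ = 1 := by
          have hEq : (⟨2 * m - 1 - (k + 1), by omega⟩ : Fin m) = ⟨k, by omega⟩ := by
            apply Fin.ext; simp only [Fin.val_mk]; omega
          rw [hEq]; exact ihdiag _
        rw [e1, e2]; ring
      · -- j < m - 1 case
        have hmk : m ≤ k := by omega
        rw [dif_pos (by omega)]
        have e1 : wvec m hm k ⟨2 * m - 1 - (k + 1) - 1, by omega⟩ = 0 := by
          apply hzero; simp only [Fin.val_mk]; omega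
        have e2 : wvec m hm k ⟨2 * m - 1 - (k + 1) + 1, by omega⟩ = 1 := by
          have hEq : (⟨2 * m - 1 - (k + 1) + 1, by omega⟩ : Fin m) = ⟨2 * m - 1 - k, by omega⟩ := by
            apply Fin.ext; simp only [Fin.val_mk]; omega
          rw [hEq]; exact ihrefl hmk (by omega)
        rw [e1, e2]; ring

/-- The matrix whose columns are `e₁, Ā₀² e₁, Ā₀⁴ e₁, …, Ā₀^{2(m-1)} e₁` is invertible. -/
theorem stmt11 (m : ℕ) (hm : 2 ≤ m) :
    IsUnit (Matrix.of fun i k : Fin m =>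
      (Abar0 m ^ (2 * (k : ℕ))).mulVec (Pi.single (⟨0, by omega⟩ : Fin m) 1) i) := by
  classical
  set M : Matrix (Fin m) (Fin m) ℝ := Matrix.of fun i k : Fin m =>
      (Abar0 m ^ (2 * (k : ℕ))).mulVec (Pi.single (⟨0, by omega⟩ : Fin m) 1) i with hM
  have hMw : ∀ i k : Fin m, M i k = wvec m hm (2 * (k : ℕ)) i := fun i k => rfl
  -- the permutation
  have hf : ∀ s : Fin m, (if 2 * (s : ℕ) < m then 2 * (s : ℕ) else 2 * m - 1 - 2 * (s : ℕ)) < m := by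
    intro s; have := s.isLt; split <;> omega
  set f : Fin m → Fin m := fun s =>
    ⟨if 2 * (s : ℕ) < m then 2 * (s : ℕ) else 2 * m - 1 - 2 * (s : ℕ), hf s⟩ with hfdef
  have hfinj : Function.Injective f := by
    intro a b hab
    have ha := a.isLt; have hb := b.isLt
    have : (f a : ℕ) = (f b : ℕ) := congrArg Fin.val hab
    simp only [hfdef] at this
    apply Fin.ext
    split_ifs at this <;> omega
  have hfbij : Function.Bijective f := (Finite.injective_iff_bijective).mp hfinj
  let σ : Equiv.Perm (Fin m) := Equiv.ofBijective f hfbij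
  -- the permuted matrix
  set N : Matrix (Fin m) (Fin m) ℝ := M.submatrix σ id with hN
  have hNentry : ∀ s t : Fin m, N s t = wvec m hm (2 * (t : ℕ)) (f s) := by
    intro s t; rfl
  have htri : N.BlockTriangular id := by
    intro s t hst
    have hst' : (t : ℕ) < (s : ℕ) := hst
    rw [hNentry]
    by_contra hne
    have hsupp := (wvec_key m hm (2 * (t : ℕ))).2.1 _ hne
    have hs := s.isLt; have ht := t.isLt
    have hfv : (f s : ℕ) = if 2 * (s : ℕ) < m then 2 * (s : ℕ) else 2 * m - 1 - 2 * (s : ℕ) := rfl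
    rw [hfv] at hsupp
    split_ifs at hsupp <;> omega
  have hdiag : ∀ t : Fin m, N t t = 1 := by
    intro t
    rw [hNentry]
    have ht := t.isLt
    by_cases h : 2 * (t : ℕ) < m
    · have hfv : f t = ⟨2 * (t : ℕ), h⟩ := by
        apply Fin.ext; simp only [hfdef, Fin.val_mk]; rw [if_pos h]
      rw [hfv]
      exact (wvec_key m hm (2 * (t : ℕ))).2.2.1 h
    · have hfv : f t = ⟨2 * m - 1 - 2 * (t : ℕ), by omega⟩ := by
        apply Fin.ext; simp only [hfdef, Fin.val_mk]; rw [if_neg h]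
      rw [hfv]
      exact (wvec_key m hm (2 * (t : ℕ))).2.2.2 (by omega) (by omega)
  have hdetN : N.det = 1 := by
    rw [Matrix.det_of_upperTriangular htri]
    simp [hdiag]
  have hdetperm : N.det = (Equiv.Perm.sign σ : ℝ) * M.det := by
    rw [hN]
    exact_mod_cast Matrix.det_permute σ M
  have hMdet : M.det ≠ 0 := by
    intro h
    rw [hdetperm, h, mul_zero] at hdetN
    exact one_ne_zero hdetN.symm
  rw [Matrix.isUnit_iff_isUnit_det]
  exact isUnit_iff_ne_zero.mpr hMdet
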